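/- Let G be an E-free graph and let Q = v_1 v_2 v_3 v_4 v_5 v_1 be an induced 5-cycle in G which is a smallest induced odd cycle of G. If w ∈ A_i and w' ∈ A_{i+1} ∪ A_{i-1} ∪ B_{i-1}, then ww' is an edge of G. -/

import Mathlib

/-- `H` is contained in `G` as an induced subgraph. -/
def ContainsInduced {α β : Type*} (H : SimpleGraph α) (G : SimpleGraph β) : Prop :=
  ∃ f : α ↪ β, ∀ a b, G.Adj (f a) (f b) ↔ H.Adj a b

/-- The graph `E = S_{1,2,2}`: centre `0`, leaf `1`, and the paths `0 2 3` and `0 4 5`. -/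
def graphE : SimpleGraph (Fin 6) :=
  SimpleGraph.fromRel (fun a b =>
    ((a : ℕ), (b : ℕ)) ∈ [(0, 1), (0, 2), (2, 3), (0, 4), (4, 5)])

/-- `u : ZMod k → V` lists the vertices (in cyclic order) of an induced cycle of
length `k` in `G`. -/
def IsInducedCycle {V : Type*} (G : SimpleGraph V) {k : ℕ} (u : ZMod k → V) : Prop :=
  Function.Injective u ∧ ∀ i j : ZMod k, G.Adj (u i) (u j) ↔ (j = i + 1 ∨ i = j + 1)

/-- `v : ZMod p → V` is a smallest induced odd cycle of `G` of length `p ≥ 5`: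
an induced odd cycle of length `p ≥ 5` such that `G` has no induced odd cycle of
length `k` with `5 ≤ k < p`. -/
def IsSmallestInducedOddCycle {V : Type*} (G : SimpleGraph V) {p : ℕ}
    (v : ZMod p → V) : Prop :=
  5 ≤ p ∧ Odd p ∧ IsInducedCycle G v ∧
    ∀ k : ℕ, 5 ≤ k → k < p → Odd k → ∀ u : ZMod k → V, ¬ IsInducedCycle G u

/-- `A_i`: the vertices outside the cycle `Q` whose neighbourhood on `Q` is
exactly `{v_i}`. -/
def setA {V : Type*} (G : SimpleGraph V) {p : ℕ} (v : ZMod p → V) (i : ZMod p) :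
    Set V :=
  {w | w ∉ Set.range v ∧ ∀ j : ZMod p, G.Adj w (v j) ↔ j = i}

/-- `B_i`: the vertices outside the cycle `Q` whose neighbourhood on `Q` is
exactly `{v_i, v_{i+2}}`. -/
def setB {V : Type*} (G : SimpleGraph V) {p : ℕ} (v : ZMod p → V) (i : ZMod p) :
    Set V :=
  {w | w ∉ Set.range v ∧ ∀ j : ZMod p, G.Adj w (v j) ↔ (j = i ∨ j = i + 2)}

/-- `C_i`: the vertices outside the cycle `Q` whose neighbourhood on `Q` is
exactly `{v_i, v_{i+1}, v_{i+2}}`. -/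
def setC {V : Type*} (G : SimpleGraph V) {p : ℕ} (v : ZMod p → V) (i : ZMod p) :
    Set V :=
  {w | w ∉ Set.range v ∧ ∀ j : ZMod p, G.Adj w (v j) ↔ (j = i ∨ j = i + 1 ∨ j = i + 2)}

/-- `D_i`: the vertices outside the cycle `Q` whose neighbourhood on `Q` is
exactly `{v_i, v_{i+1}, v_{i+2}, v_{i+3}}`. -/
def setD {V : Type*} (G : SimpleGraph V) {p : ℕ} (v : ZMod p → V) (i : ZMod p) :
    Set V :=
  {w | w ∉ Set.range v ∧
    ∀ j : ZMod p, G.Adj w (v j) ↔ (j = i ∨ j = i + 1 ∨ j = i + 2 ∨ j = i + 3)}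

/-! A non-edge `w w'` would create an induced `E`. Rotating `Q`, and reflecting it when
`w' ∈ A_{i-1}`, puts one of `w, w'` in `A_0 ∪ B_0` and the other in `A_1`, so all three cases
reduce to a single configuration around `v_0`. -/

theorem containsInduced_of_adj_iff {α β : Type*} {H : SimpleGraph α} {G : SimpleGraph β}
    (hH : Function.Injective H.neighborSet) (f : α → β)
    (hf : ∀ a b, G.Adj (f a) (f b) ↔ H.Adj a b) : ContainsInduced H G :=
  ⟨⟨f, fun a b hab => hH <| Set.ext fun c => by
    simp only [SimpleGraph.mem_neighborSet, ← hf, hab]⟩, hf⟩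

theorem graphE_neighborSet_injective : Function.Injective graphE.neighborSet := by
  intro a b hab
  replace hab := Set.ext_iff.1 hab
  simp only [graphE, SimpleGraph.mem_neighborSet, SimpleGraph.fromRel_adj] at hab
  revert a b
  decide

section Cycle

variable {V : Type*} {G : SimpleGraph V} {k : ℕ} {v : ZMod k → V}

theorem IsInducedCycle.comp_addRight (hv : IsInducedCycle G v) (c : ZMod k) :
    IsInducedCycle G (v ∘ Equiv.addRight c) :=
  ⟨hv.1.comp (Equiv.addRight c).injective, fun i j => by
    simp only [Function.comp_apply, Equiv.coe_addRight, hv.2, add_right_comm _ c 1, add_left_inj]⟩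

theorem IsInducedCycle.comp_neg (hv : IsInducedCycle G v) :
    IsInducedCycle G (v ∘ Equiv.neg (ZMod k)) :=
  ⟨hv.1.comp (Equiv.neg _).injective, fun i j => by
    rw [Function.comp_apply, Function.comp_apply, Equiv.neg_apply, hv.2, or_comm]
    apply or_congr <;> constructor <;> intro h <;> linear_combination h⟩

theorem setA_comp_equiv (e : ZMod k ≃ ZMod k) (i : ZMod k) :
    setA G (v ∘ e) i = setA G v (e i) := by
  ext w
  refine and_congr (by rw [e.surjective.range_comp]) (e.forall_congr fun j => ?_)
  rw [Function.comp_apply, e.apply_eq_iff_eq]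

theorem setB_comp_addRight (c i : ZMod k) :
    setB G (v ∘ Equiv.addRight c) i = setB G v (i + c) := by
  ext w
  refine and_congr (by rw [(Equiv.addRight c).surjective.range_comp])
    ((Equiv.addRight c).forall_congr fun j => ?_)
  simp only [Function.comp_apply, Equiv.coe_addRight, add_right_comm i c 2, add_left_inj]

end Cycle

theorem adj_of_mem_setA_zero_of_mem_setA_one {V : Type*} {G : SimpleGraph V}
    (hE : ¬ ContainsInduced graphE G) {v : ZMod 5 → V} (hv : IsInducedCycle G v) {x y : V}
    (hx : x ∈ setA G v 0 ∪ setB G v 0) (hy : y ∈ setA G v 1) : G.Adj x y := by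
  have hxv : ∀ j, j ≠ 2 → (G.Adj x (v j) ↔ j = 0) := by
    rcases hx with ⟨-, hx⟩ | ⟨-, hx⟩ <;> intro j hj <;> simp [hx, hj]
  by_contra hxy
  -- the induced `E`: centre `v 0`, leaf `x`, legs `v 1 y` and `v 4 v 3`
  refine hE (containsInduced_of_adj_iff graphE_neighborSet_injective
    ![v 0, x, v 1, y, v 4, v 3] fun a b => ?_)
  fin_cases a <;> fin_cases b <;>
    simp +decide [graphE, hv.2, hy.2, hxv, hxy, G.adj_comm _ x, G.adj_comm _ y]

theorem adj_of_mem_setA_add_one {V : Type*} {G : SimpleGraph V}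
    (hE : ¬ ContainsInduced graphE G) {v : ZMod 5 → V} (hv : IsInducedCycle G v) {c : ZMod 5}
    {x y : V} (hx : x ∈ setA G v c ∪ setB G v c) (hy : y ∈ setA G v (c + 1)) : G.Adj x y :=
  adj_of_mem_setA_zero_of_mem_setA_one hE (hv.comp_addRight c)
    (by
      rw [setA_comp_equiv, setB_comp_addRight]
      simpa only [Equiv.coe_addRight, zero_add] using hx)
    (by rw [setA_comp_equiv]; simpa only [Equiv.coe_addRight, add_comm] using hy)

theorem A_nbr_edges_general {V : Type*} (G : SimpleGraph V)
    (hE : ¬ ContainsInduced graphE G)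
    (v : ZMod 5 → V) (hQ : IsSmallestInducedOddCycle G v)
    (i : ZMod 5) (w w' : V) (hw : w ∈ setA G v i)
    (hw' : w' ∈ setA G v (i + 1) ∪ setA G v (i - 1) ∪ setB G v (i - 1)) :
    G.Adj w w' := by
  obtain ⟨-, -, hv, -⟩ := hQ
  rcases hw' with (hw' | hw') | hw'
  · exact adj_of_mem_setA_add_one hE hv (Or.inl hw) hw'
  · refine adj_of_mem_setA_add_one hE hv.comp_neg (c := -i) (Or.inl ?_) ?_
    · rwa [setA_comp_equiv, Equiv.neg_apply, neg_neg]
    · rwa [setA_comp_equiv, Equiv.neg_apply, neg_add, neg_neg, ← sub_eq_add_neg]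
  · exact (adj_of_mem_setA_add_one hE hv (Or.inr hw') (by rwa [sub_add_cancel])).symm

/-- Let `G` be an `E`-free graph and let `Q = v_1 … v_5 v_1` be an induced 5-cycle of `G`
which is a smallest induced odd cycle of `G`.  If `w ∈ A_i` and
`w' ∈ A_{i+1} ∪ A_{i-1} ∪ B_{i-1}`, then `w w'` is an edge of `G`. -/
theorem A_nbr_edges {V : Type*} [Fintype V] (G : SimpleGraph V)
    (hE : ¬ ContainsInduced graphE G)
    (v : ZMod 5 → V) (hQ : IsSmallestInducedOddCycle G v)
    (i : ZMod 5) (w w' : V) (hw : w ∈ setA G v i)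
    (hw' : w' ∈ setA G v (i + 1) ∪ setA G v (i - 1) ∪ setB G v (i - 1)) :
    G.Adj w w' :=
  A_nbr_edges_general G hE v hQ i w w' hw hw'
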